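/- arXiv:2604.16466 — 2 statements merged into one kernel-verified Lean document; each statement's English description precedes it below -/
import Mathlib

section
/- (Dominated embedding, part 3) If (x⋆, y⋆) is a Nash equilibrium of the original game (A, Δ_m, Δ_n), then its zero-padded extension (x̃⋆, ỹ⋆) = ((x⋆,0,…,0), (y⋆,0,…,0)) ∈ Δ_M × Δ_N is a Nash equilibrium of the embedded game (Ã, Δ_M, Δ_N). -/
/-- Expected payoff ⟨x, Ay⟩. -/
def payoff {m n : ℕ} (A : Matrix (Fin m) (Fin n) ℝ) (x : Fin m → ℝ) (y : Fin n → ℝ) : ℝ :=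
  ∑ i, ∑ j, x i * A i j * y j

/-- Nash equilibrium (saddle point) of the zero-sum game with payoff matrix A. -/
def IsNash {m n : ℕ} (A : Matrix (Fin m) (Fin n) ℝ) (x : Fin m → ℝ) (y : Fin n → ℝ) : Prop :=
  x ∈ stdSimplex ℝ (Fin m) ∧ y ∈ stdSimplex ℝ (Fin n) ∧
    (∀ y' ∈ stdSimplex ℝ (Fin n), payoff A x y' ≥ payoff A x y) ∧
    (∀ x' ∈ stdSimplex ℝ (Fin m), payoff A x y ≥ payoff A x' y)

/-- The dominated embedding Ã of A into an M × N matrix. -/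
def domEmbed {m n : ℕ} (A : Matrix (Fin m) (Fin n) ℝ) (M N : ℕ) (C : ℝ) :
    Matrix (Fin M) (Fin N) ℝ := fun i j =>
  if hi : (i : ℕ) < m then
    (if hj : (j : ℕ) < n then A ⟨i, hi⟩ ⟨j, hj⟩ else C)
  else
    (if (j : ℕ) < n then -C else 0)

open Finset in
lemma filter_lt_eq_map {m M : ℕ} (hM : m ≤ M) :
    Finset.univ.filter (fun i : Fin M => (i : ℕ) < m) =
      Finset.univ.map (Fin.castLEEmb hM) := by
  ext i
  simp only [mem_filter, mem_univ, true_and, mem_map]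
  constructor
  · intro h; exact ⟨⟨i, h⟩, by simp [Fin.castLEEmb, Fin.ext_iff]⟩
  · rintro ⟨j, -, rfl⟩; simp

lemma sum_split {m M : ℕ} (hM : m ≤ M) (f : Fin M → ℝ) :
    ∑ i, f i = (∑ i : Fin m, f (Fin.castLE hM i)) +
      ∑ i ∈ Finset.univ.filter (fun i : Fin M => ¬ (i : ℕ) < m), f i := by
  rw [← Finset.sum_filter_add_sum_filter_not Finset.univ (fun i : Fin M => (i : ℕ) < m) f,
    filter_lt_eq_map hM, Finset.sum_map]
  rfl


lemma payoff_left {m n M N : ℕ} (hM : m ≤ M) (hN : n ≤ N)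
    (A : Matrix (Fin m) (Fin n) ℝ) (C : ℝ) (x : Fin m → ℝ) (y' : Fin N → ℝ) :
    payoff (domEmbed A M N C)
      (fun i : Fin M => if hi : (i : ℕ) < m then x ⟨i, hi⟩ else 0) y' =
    (∑ i, ∑ j, x i * A i j * y' (Fin.castLE hN j)) +
      (∑ i, x i) * C *
        (∑ j ∈ Finset.univ.filter (fun j : Fin N => ¬ (j : ℕ) < n), y' j) := by
  unfold payoff
  rw [sum_split hM]
  have h0 : ∑ i ∈ Finset.univ.filter (fun i : Fin M => ¬ (i : ℕ) < m),
      ∑ j, (if hi : (i : ℕ) < m then x ⟨i, hi⟩ else 0) * domEmbed A M N C i j * y' j = 0 := by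
    refine Finset.sum_eq_zero fun i hi => ?_
    rw [Finset.mem_filter] at hi
    refine Finset.sum_eq_zero fun j _ => ?_
    rw [dif_neg hi.2, zero_mul, zero_mul]
  rw [h0, add_zero]
  have h1 : ∀ i : Fin m,
      ∑ j : Fin N, (if hi : ((Fin.castLE hM i : Fin M) : ℕ) < m then x ⟨_, hi⟩ else 0) *
          domEmbed A M N C (Fin.castLE hM i) j * y' j =
      (∑ j, x i * A i j * y' (Fin.castLE hN j)) +
        x i * C * (∑ j ∈ Finset.univ.filter (fun j : Fin N => ¬ (j : ℕ) < n), y' j) := by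
    intro i
    rw [sum_split hN]
    congr 1
    · refine Finset.sum_congr rfl fun j _ => ?_
      have hi : ((Fin.castLE hM i : Fin M) : ℕ) < m := by simpa using i.isLt
      have hj : ((Fin.castLE hN j : Fin N) : ℕ) < n := by simpa using j.isLt
      rw [dif_pos hi]
      simp [domEmbed, hi, hj]
    · rw [Finset.mul_sum]
      refine Finset.sum_congr rfl fun j hj => ?_
      rw [Finset.mem_filter] at hj
      have hi : ((Fin.castLE hM i : Fin M) : ℕ) < m := by simpa using i.isLt
      rw [dif_pos hi]
      simp only [domEmbed, dif_pos hi, dif_neg hj.2]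
      have hxi : (⟨((Fin.castLE hM i : Fin M) : ℕ), hi⟩ : Fin m) = i := by ext; simp
      rw [hxi]
  rw [Finset.sum_congr rfl fun i _ => h1 i, Finset.sum_add_distrib, Finset.sum_mul,
    Finset.sum_mul]

lemma payoff_right {m n M N : ℕ} (hM : m ≤ M) (hN : n ≤ N)
    (A : Matrix (Fin m) (Fin n) ℝ) (C : ℝ) (y : Fin n → ℝ) (x' : Fin M → ℝ) :
    payoff (domEmbed A M N C) x'
      (fun j : Fin N => if hj : (j : ℕ) < n then y ⟨j, hj⟩ else 0) =
    (∑ i, ∑ j, x' (Fin.castLE hM i) * A i j * y j) +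
      (∑ i ∈ Finset.univ.filter (fun i : Fin M => ¬ (i : ℕ) < m), x' i) * (-C) *
        (∑ j, y j) := by
  unfold payoff
  rw [sum_split hM]
  congr 1
  · refine Finset.sum_congr rfl fun i _ => ?_
    have hi : ((Fin.castLE hM i : Fin M) : ℕ) < m := by simpa using i.isLt
    rw [sum_split hN]
    have h0 : ∑ j ∈ Finset.univ.filter (fun j : Fin N => ¬ (j : ℕ) < n),
        x' (Fin.castLE hM i) * domEmbed A M N C (Fin.castLE hM i) j *
          (if hj : (j : ℕ) < n then y ⟨j, hj⟩ else 0) = 0 := by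
      refine Finset.sum_eq_zero fun j hj => ?_
      rw [Finset.mem_filter] at hj
      rw [dif_neg hj.2, mul_zero]
    rw [h0, add_zero]
    refine Finset.sum_congr rfl fun j _ => ?_
    have hj : ((Fin.castLE hN j : Fin N) : ℕ) < n := by simpa using j.isLt
    simp [domEmbed, hi, hj]
  · rw [Finset.sum_mul, Finset.sum_mul]
    refine Finset.sum_congr rfl fun i hi => ?_
    rw [Finset.mem_filter] at hi
    rw [sum_split hN]
    have h0 : ∑ j ∈ Finset.univ.filter (fun j : Fin N => ¬ (j : ℕ) < n),
        x' i * domEmbed A M N C i j *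
          (if hj : (j : ℕ) < n then y ⟨j, hj⟩ else 0) = 0 := by
      refine Finset.sum_eq_zero fun j hj => ?_
      rw [Finset.mem_filter] at hj
      rw [dif_neg hj.2, mul_zero]
    rw [h0, add_zero, Finset.mul_sum]
    refine Finset.sum_congr rfl fun j _ => ?_
    have hj : ((Fin.castLE hN j : Fin N) : ℕ) < n := by simpa using j.isLt
    simp only [domEmbed, dif_neg hi.2, if_pos hj, dif_pos hj]
    have : (⟨((Fin.castLE hN j : Fin N) : ℕ), hj⟩ : Fin n) = j := by ext; simp
    rw [this]

lemma ext_mem_simplex {m M : ℕ} (hM : m ≤ M) (x : Fin m → ℝ)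
    (hx : x ∈ stdSimplex ℝ (Fin m)) :
    (fun i : Fin M => if hi : (i : ℕ) < m then x ⟨i, hi⟩ else 0) ∈ stdSimplex ℝ (Fin M) := by
  obtain ⟨hx1, hx2⟩ := hx
  constructor
  · intro i
    dsimp only
    split
    · exact hx1 _
    · exact le_refl 0
  · show ∑ i : Fin M, (if hi : (i : ℕ) < m then x ⟨i, hi⟩ else 0) = 1
    rw [sum_split hM]
    have h0 : ∑ i ∈ Finset.univ.filter (fun i : Fin M => ¬ (i : ℕ) < m),
        (if hi : (i : ℕ) < m then x ⟨i, hi⟩ else 0) = 0 := by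
      refine Finset.sum_eq_zero fun i hi => ?_
      rw [Finset.mem_filter] at hi
      rw [dif_neg hi.2]
    rw [h0, add_zero, ← hx2]
    refine Finset.sum_congr rfl fun i _ => ?_
    have hi : ((Fin.castLE hM i : Fin M) : ℕ) < m := by simpa using i.isLt
    rw [dif_pos hi]
    congr 1

lemma payoff_abs_le {m n : ℕ} (A : Matrix (Fin m) (Fin n) ℝ) (C : ℝ)
    (hC : ∀ i j, |A i j| < C) (x : Fin m → ℝ) (y : Fin n → ℝ)
    (hx : x ∈ stdSimplex ℝ (Fin m)) (hy : y ∈ stdSimplex ℝ (Fin n)) :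
    |payoff A x y| ≤ C := by
  obtain ⟨hx1, hx2⟩ := hx
  obtain ⟨hy1, hy2⟩ := hy
  unfold payoff
  calc |∑ i, ∑ j, x i * A i j * y j| ≤ ∑ i, ∑ j, |x i * A i j * y j| :=
        (Finset.abs_sum_le_sum_abs _ _).trans
          (Finset.sum_le_sum fun i _ => Finset.abs_sum_le_sum_abs _ _)
    _ ≤ ∑ i, ∑ j, x i * C * y j := by
        refine Finset.sum_le_sum fun i _ => Finset.sum_le_sum fun j _ => ?_
        rw [abs_mul, abs_mul, abs_of_nonneg (hx1 i), abs_of_nonneg (hy1 j)]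
        have h1 := (hC i j).le
        have h2 := abs_nonneg (A i j)
        nlinarith [mul_nonneg (mul_nonneg (hx1 i) (hy1 j)) (sub_nonneg.2 h1)]
    _ = C := by
        have h3 : ∀ i : Fin m, ∑ j, x i * C * y j = x i * C := by
          intro i; rw [← Finset.mul_sum, hy2, mul_one]
        rw [Finset.sum_congr rfl fun i _ => h3 i, ← Finset.sum_mul, hx2, one_mul]


theorem domEmbed_extension_isNash {m n M N : ℕ}
    (A : Matrix (Fin m) (Fin n) ℝ) (C : ℝ)
    (hC : ∀ i j, |A i j| < C)
    (hM : m ≤ M) (hN : n ≤ N)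
    (x : Fin m → ℝ) (y : Fin n → ℝ)
    (hNE : IsNash A x y) :
    IsNash (domEmbed A M N C)
      (fun i : Fin M => if hi : (i : ℕ) < m then x ⟨i, hi⟩ else 0)
      (fun j : Fin N => if hj : (j : ℕ) < n then y ⟨j, hj⟩ else 0) := by
  obtain ⟨hx, hy, hmin, hmax⟩ := hNE
  have habs := payoff_abs_le A C hC x y hx hy
  have hvub := (abs_le.1 habs).2
  have hvlb := (abs_le.1 habs).1
  have hx1 := hx.1; have hx2 := hx.2
  have hy1 := hy.1; have hy2 := hy.2
  have base : payoff (domEmbed A M N C)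
      (fun i : Fin M => if hi : (i : ℕ) < m then x ⟨i, hi⟩ else 0)
      (fun j : Fin N => if hj : (j : ℕ) < n then y ⟨j, hj⟩ else 0) = payoff A x y := by
    rw [payoff_right hM hN]
    have h0 : ∑ i ∈ Finset.univ.filter (fun i : Fin M => ¬ (i : ℕ) < m),
        (if hi : (i : ℕ) < m then x ⟨i, hi⟩ else 0) = 0 := by
      refine Finset.sum_eq_zero fun i hi => ?_
      rw [Finset.mem_filter] at hi; rw [dif_neg hi.2]
    rw [h0, zero_mul, zero_mul, add_zero]
    unfold payoff
    refine Finset.sum_congr rfl fun i _ => Finset.sum_congr rfl fun j _ => ?_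
    have hi : ((Fin.castLE hM i : Fin M) : ℕ) < m := by simpa using i.isLt
    rw [dif_pos hi]
    have hxi : (⟨((Fin.castLE hM i : Fin M) : ℕ), hi⟩ : Fin m) = i := by ext; simp
    rw [hxi]
  refine ⟨ext_mem_simplex hM x hx, ext_mem_simplex hN y hy, ?_, ?_⟩
  · intro y' hy'
    rw [ge_iff_le, base, payoff_left hM hN, hx2, one_mul]
    set t : ℝ := ∑ j ∈ Finset.univ.filter (fun j : Fin N => ¬ (j : ℕ) < n), y' j with ht
    have ht0 : 0 ≤ t := Finset.sum_nonneg fun j _ => hy'.1 j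
    have hst : (∑ j : Fin n, y' (Fin.castLE hN j)) + t = 1 := by
      rw [ht, ← sum_split hN]; exact hy'.2
    have hy'' : (fun j : Fin n => y' (Fin.castLE hN j) + t * y j) ∈ stdSimplex ℝ (Fin n) := by
      constructor
      · intro j; exact add_nonneg (hy'.1 _) (mul_nonneg ht0 (hy1 j))
      · show ∑ j : Fin n, (y' (Fin.castLE hN j) + t * y j) = 1
        rw [Finset.sum_add_distrib, ← Finset.mul_sum, hy2, mul_one]; exact hst
    have key : payoff A x (fun j : Fin n => y' (Fin.castLE hN j) + t * y j) =
        (∑ i, ∑ j, x i * A i j * y' (Fin.castLE hN j)) + t * payoff A x y := by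
      unfold payoff
      have h1 : ∀ i : Fin m, ∑ j, x i * A i j * (y' (Fin.castLE hN j) + t * y j) =
          (∑ j, x i * A i j * y' (Fin.castLE hN j)) + t * ∑ j, x i * A i j * y j := by
        intro i
        rw [Finset.mul_sum, ← Finset.sum_add_distrib]
        refine Finset.sum_congr rfl fun j _ => by ring
      rw [Finset.sum_congr rfl fun i _ => h1 i, Finset.sum_add_distrib, ← Finset.mul_sum]
    have hle := hmin _ hy''
    rw [key] at hle
    have hq : t * (C - payoff A x y) ≥ 0 := mul_nonneg ht0 (by linarith)
    rw [ge_iff_le] at hle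
    linarith
  · intro x' hx'
    rw [ge_iff_le, base, payoff_right hM hN, hy2, mul_one]
    set u : ℝ := ∑ i ∈ Finset.univ.filter (fun i : Fin M => ¬ (i : ℕ) < m), x' i with hu
    have hu0 : 0 ≤ u := Finset.sum_nonneg fun i _ => hx'.1 i
    have hsu : (∑ i : Fin m, x' (Fin.castLE hM i)) + u = 1 := by
      rw [hu, ← sum_split hM]; exact hx'.2
    have hx'' : (fun i : Fin m => x' (Fin.castLE hM i) + u * x i) ∈ stdSimplex ℝ (Fin m) := by
      constructor
      · intro i; exact add_nonneg (hx'.1 _) (mul_nonneg hu0 (hx1 i))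
      · show ∑ i : Fin m, (x' (Fin.castLE hM i) + u * x i) = 1
        rw [Finset.sum_add_distrib, ← Finset.mul_sum, hx2, mul_one]; exact hsu
    have key : payoff A (fun i : Fin m => x' (Fin.castLE hM i) + u * x i) y =
        (∑ i, ∑ j, x' (Fin.castLE hM i) * A i j * y j) + u * payoff A x y := by
      unfold payoff
      have h1 : ∀ i : Fin m, ∑ j, (x' (Fin.castLE hM i) + u * x i) * A i j * y j =
          (∑ j, x' (Fin.castLE hM i) * A i j * y j) + u * ∑ j, x i * A i j * y j := by
        intro i
        rw [Finset.mul_sum, ← Finset.sum_add_distrib]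
        refine Finset.sum_congr rfl fun j _ => by ring
      rw [Finset.sum_congr rfl fun i _ => h1 i, Finset.sum_add_distrib, ← Finset.mul_sum]
    have hle := hmax _ hx''
    rw [key] at hle
    have hq : u * (C + payoff A x y) ≥ 0 := mul_nonneg hu0 (by linarith)
    rw [ge_iff_le] at hle
    linarith
end

section
/- Combining the predictor, corrector, and residual bounds: under the assumptions that Π_𝒲 is a projection onto a closed convex set, G is L-Lipschitz, and the stochastic estimates are unbiased with variance at most σ², the expected squared residual at step t satisfies η²E[‖R_η(ω_t)‖₂²] ≤ 2E[‖ω_{t+1} − ω_t‖₂²] + 8η²L²E[‖ω_{t+1/2} − ω_t‖₂²] + 8η²σ² (using ‖ω_{t+1} − z_t‖₂² ≤ 2(ηL‖ω_{t+1/2}−ω_t‖₂)² + 2(η‖ξ'‖₂)² within the residual bound). -/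
open MeasureTheory

/-- `P` is the Euclidean projection onto the nonempty closed convex set `W`:
it maps into `W` and satisfies the variational characterization. -/
def IsProjOn {d : ℕ} (P : EuclideanSpace ℝ (Fin d) → EuclideanSpace ℝ (Fin d))
    (W : Set (EuclideanSpace ℝ (Fin d))) : Prop :=
  W.Nonempty ∧ IsClosed W ∧ Convex ℝ W ∧
    ∀ z, P z ∈ W ∧ ∀ u ∈ W, inner ℝ (z - P z) (u - P z) ≤ (0 : ℝ)

open RealInnerProductSpace in
lemma proj_nonexpansive {d : ℕ} {P : EuclideanSpace ℝ (Fin d) → EuclideanSpace ℝ (Fin d)}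
    {W : Set (EuclideanSpace ℝ (Fin d))} (hP : IsProjOn P W) (a b : EuclideanSpace ℝ (Fin d)) :
    ‖P a - P b‖ ≤ ‖a - b‖ := by
  obtain ⟨-, -, -, hpr⟩ := hP
  have h1 : ⟪a - P a, P b - P a⟫ ≤ (0:ℝ) := (hpr a).2 (P b) (hpr b).1
  have h2 : ⟪b - P b, P a - P b⟫ ≤ (0:ℝ) := (hpr b).2 (P a) (hpr a).1
  have key : ‖P a - P b‖ ^ 2 ≤ ⟪a - b, P a - P b⟫ := by
    have e1 : ⟪a - b, P a - P b⟫
        = ⟪(a - P a) - (b - P b), P a - P b⟫ + ⟪P a - P b, P a - P b⟫ := by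
      rw [← inner_add_left]
      congr 1
      abel
    have e2 : ⟪(a - P a) - (b - P b), P a - P b⟫
        = ⟪a - P a, P a - P b⟫ - ⟪b - P b, P a - P b⟫ := inner_sub_left _ _ _
    have e3 : ⟪a - P a, P a - P b⟫ = -⟪a - P a, P b - P a⟫ := by
      rw [← inner_neg_right, neg_sub]
    have e4 : ⟪P a - P b, P a - P b⟫ = ‖P a - P b‖ ^ 2 :=
      real_inner_self_eq_norm_sq _
    rw [e1, e2, e3, e4]
    linarith
  have hle : inner ℝ (a - b) (P a - P b) ≤ ‖a - b‖ * ‖P a - P b‖ := real_inner_le_norm _ _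
  rcases eq_or_lt_of_le (norm_nonneg (P a - P b)) with h | h
  · rw [← h]; exact norm_nonneg _
  · nlinarith [key, hle]

set_option maxHeartbeats 1000000 in
theorem combined_residual_bound {d : ℕ}
    (W : Set (EuclideanSpace ℝ (Fin d)))
    (P : EuclideanSpace ℝ (Fin d) → EuclideanSpace ℝ (Fin d))
    (hP : IsProjOn P W) (η : ℝ) (hη : 0 < η) (L : ℝ)
    (G : EuclideanSpace ℝ (Fin d) → EuclideanSpace ℝ (Fin d))
    (hLip : LipschitzWith (Real.toNNReal L) G)
    (ωt : EuclideanSpace ℝ (Fin d))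
    (Ω : Type) (_ : MeasurableSpace Ω) (μ : Measure Ω) [IsProbabilityMeasure μ]
    (Ghat Ghat' : Ω → EuclideanSpace ℝ (Fin d)) (σ : ℝ)
    (hmeas : Measurable Ghat) (hmeas' : Measurable Ghat')
    (ωhalf ωnext : Ω → EuclideanSpace ℝ (Fin d))
    (hhalf : ∀ ω', ωhalf ω' = P (ωt - η • Ghat ω'))
    (hnext : ∀ ω', ωnext ω' = P (ωt - η • Ghat' ω'))
    (hunbiased : (∫ ω', Ghat ω' ∂μ) = G ωt)
    (hvar : (∫ ω', ‖Ghat ω' - G ωt‖ ^ 2 ∂μ) ≤ σ ^ 2)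
    (hvar' : (∫ ω', ‖Ghat' ω' - G (ωhalf ω')‖ ^ 2 ∂μ) ≤ σ ^ 2)
    (hint : Integrable (fun ω' => ‖Ghat ω' - G ωt‖ ^ 2) μ)
    (hint' : Integrable (fun ω' => ‖Ghat' ω' - G (ωhalf ω')‖ ^ 2) μ)
    (hintnext : Integrable (fun ω' => ‖ωnext ω' - ωt‖ ^ 2) μ)
    (hinthalf : Integrable (fun ω' => ‖ωhalf ω' - ωt‖ ^ 2) μ)
    (R : EuclideanSpace ℝ (Fin d))
    (hR : R = (1 / η) • (ωt - P (ωt - η • G ωt))) :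
    η ^ 2 * ‖R‖ ^ 2 ≤
      2 * (∫ ω', ‖ωnext ω' - ωt‖ ^ 2 ∂μ) +
        8 * η ^ 2 * L ^ 2 * (∫ ω', ‖ωhalf ω' - ωt‖ ^ 2 ∂μ) + 8 * η ^ 2 * σ ^ 2 := by

  classical
  set z : EuclideanSpace ℝ (Fin d) := P (ωt - η • G ωt) with hz
  have hηR : η ^ 2 * ‖R‖ ^ 2 = ‖ωt - z‖ ^ 2 := by
    rw [hR, norm_smul]
    rw [Real.norm_eq_abs, abs_of_pos (by positivity : (0:ℝ) < 1/η)]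
    field_simp
  have hL : ∀ x y : EuclideanSpace ℝ (Fin d), ‖G x - G y‖ ≤ |L| * ‖x - y‖ := by
    intro x y
    have := hLip.dist_le_mul x y
    rw [dist_eq_norm, dist_eq_norm] at this
    calc ‖G x - G y‖ ≤ (Real.toNNReal L : ℝ) * ‖x - y‖ := this
      _ ≤ |L| * ‖x - y‖ := by
          apply mul_le_mul_of_nonneg_right _ (norm_nonneg _)
          rw [Real.coe_toNNReal']
          exact max_le (le_abs_self L) (abs_nonneg L)
  -- pointwise bound
  have hpt : ∀ ω', ‖ωt - z‖ ^ 2 ≤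
      2 * ‖ωnext ω' - ωt‖ ^ 2 + 4 * η ^ 2 * L ^ 2 * ‖ωhalf ω' - ωt‖ ^ 2
        + 4 * η ^ 2 * ‖Ghat' ω' - G (ωhalf ω')‖ ^ 2 := by
    intro ω'
    have hnz : ‖ωnext ω' - z‖ ≤ η * ‖Ghat' ω' - G ωt‖ := by
      rw [hnext ω', hz]
      calc ‖P (ωt - η • Ghat' ω') - P (ωt - η • G ωt)‖
          ≤ ‖(ωt - η • Ghat' ω') - (ωt - η • G ωt)‖ := proj_nonexpansive ⟨hP.1, hP.2.1, hP.2.2.1, hP.2.2.2⟩ _ _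
        _ = ‖η • (G ωt - Ghat' ω')‖ := by congr 1; rw [smul_sub]; abel
        _ = η * ‖G ωt - Ghat' ω'‖ := by rw [norm_smul, Real.norm_eq_abs, abs_of_pos hη]
        _ = η * ‖Ghat' ω' - G ωt‖ := by rw [norm_sub_rev]
    have htri : ‖Ghat' ω' - G ωt‖ ≤ ‖Ghat' ω' - G (ωhalf ω')‖ + |L| * ‖ωhalf ω' - ωt‖ := by
      calc ‖Ghat' ω' - G ωt‖ = ‖(Ghat' ω' - G (ωhalf ω')) + (G (ωhalf ω') - G ωt)‖ := by
            congr 1; abel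
        _ ≤ ‖Ghat' ω' - G (ωhalf ω')‖ + ‖G (ωhalf ω') - G ωt‖ := norm_add_le _ _
        _ ≤ ‖Ghat' ω' - G (ωhalf ω')‖ + |L| * ‖ωhalf ω' - ωt‖ := by
            have := hL (ωhalf ω') ωt
            linarith
    have htri2 : ‖ωt - z‖ ≤ ‖ωnext ω' - ωt‖ + ‖ωnext ω' - z‖ := by
      calc ‖ωt - z‖ = ‖(ωnext ω' - z) - (ωnext ω' - ωt)‖ := by congr 1; abel
        _ ≤ ‖ωnext ω' - z‖ + ‖ωnext ω' - ωt‖ := norm_sub_le _ _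
        _ = ‖ωnext ω' - ωt‖ + ‖ωnext ω' - z‖ := by ring
    have hLsq : |L| ^ 2 = L ^ 2 := sq_abs L
    have hC : ‖ωnext ω' - z‖ ≤ η * ‖Ghat' ω' - G (ωhalf ω')‖ + η * (|L| * ‖ωhalf ω' - ωt‖) := by
      have := mul_le_mul_of_nonneg_left htri hη.le
      nlinarith
    set A := ‖ωt - z‖
    set B := ‖ωnext ω' - ωt‖
    set C := ‖ωnext ω' - z‖
    set S := ‖Ghat' ω' - G (ωhalf ω')‖
    set T := ‖ωhalf ω' - ωt‖
    have hA2 : A ^ 2 ≤ (B + C) ^ 2 := pow_le_pow_left₀ (norm_nonneg _) htri2 2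
    have hC2 : C ^ 2 ≤ (η * S + η * (|L| * T)) ^ 2 := pow_le_pow_left₀ (norm_nonneg _) hC 2
    have e1 : (B + C) ^ 2 ≤ 2 * B ^ 2 + 2 * C ^ 2 := by nlinarith [sq_nonneg (B - C)]
    have e2 : (η * S + η * (|L| * T)) ^ 2
        ≤ 2 * η ^ 2 * S ^ 2 + 2 * η ^ 2 * L ^ 2 * T ^ 2 := by
      have e2' : (η * S + η * (|L| * T)) ^ 2
          ≤ 2 * η ^ 2 * S ^ 2 + 2 * η ^ 2 * |L| ^ 2 * T ^ 2 := by
        nlinarith [sq_nonneg (η * S - η * (|L| * T))]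
      rw [hLsq] at e2'
      exact e2'
    linarith
  -- integrate
  have hintRHS : Integrable (fun ω' =>
      2 * ‖ωnext ω' - ωt‖ ^ 2 + 4 * η ^ 2 * L ^ 2 * ‖ωhalf ω' - ωt‖ ^ 2
        + 4 * η ^ 2 * ‖Ghat' ω' - G (ωhalf ω')‖ ^ 2) μ := by
    exact ((hintnext.const_mul 2).add (hinthalf.const_mul (4 * η ^ 2 * L ^ 2))).add (hint'.const_mul (4 * η ^ 2))
  have hmono : ‖ωt - z‖ ^ 2 ≤ ∫ ω', (2 * ‖ωnext ω' - ωt‖ ^ 2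
      + 4 * η ^ 2 * L ^ 2 * ‖ωhalf ω' - ωt‖ ^ 2
      + 4 * η ^ 2 * ‖Ghat' ω' - G (ωhalf ω')‖ ^ 2) ∂μ := by
    have := integral_mono (integrable_const (‖ωt - z‖ ^ 2)) hintRHS hpt
    simpa using this
  have hsplit : ∫ ω', (2 * ‖ωnext ω' - ωt‖ ^ 2
      + 4 * η ^ 2 * L ^ 2 * ‖ωhalf ω' - ωt‖ ^ 2
      + 4 * η ^ 2 * ‖Ghat' ω' - G (ωhalf ω')‖ ^ 2) ∂μ
      = 2 * (∫ ω', ‖ωnext ω' - ωt‖ ^ 2 ∂μ)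
        + 4 * η ^ 2 * L ^ 2 * (∫ ω', ‖ωhalf ω' - ωt‖ ^ 2 ∂μ)
        + 4 * η ^ 2 * (∫ ω', ‖Ghat' ω' - G (ωhalf ω')‖ ^ 2 ∂μ) := by
    have I1 : Integrable (fun ω' => 2 * ‖ωnext ω' - ωt‖ ^ 2) μ := hintnext.const_mul 2
    have I2 : Integrable (fun ω' => 4 * η ^ 2 * L ^ 2 * ‖ωhalf ω' - ωt‖ ^ 2) μ :=
      hinthalf.const_mul (4 * η ^ 2 * L ^ 2)
    have I3 : Integrable (fun ω' => 4 * η ^ 2 * ‖Ghat' ω' - G (ωhalf ω')‖ ^ 2) μ :=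
      hint'.const_mul (4 * η ^ 2)
    have I12 : Integrable (fun ω' => 2 * ‖ωnext ω' - ωt‖ ^ 2
        + 4 * η ^ 2 * L ^ 2 * ‖ωhalf ω' - ωt‖ ^ 2) μ := I1.add I2
    rw [integral_add I12 I3, integral_add I1 I2,
      integral_const_mul, integral_const_mul, integral_const_mul]
  have hnn1 : 0 ≤ ∫ ω', ‖ωnext ω' - ωt‖ ^ 2 ∂μ := integral_nonneg fun _ => by positivity
  have hnn2 : 0 ≤ ∫ ω', ‖ωhalf ω' - ωt‖ ^ 2 ∂μ := integral_nonneg fun _ => by positivity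
  have hnn3 : 0 ≤ ∫ ω', ‖Ghat' ω' - G (ωhalf ω')‖ ^ 2 ∂μ := integral_nonneg fun _ => by positivity
  have hη2 : 0 ≤ η ^ 2 := sq_nonneg η
  have hL2 : 0 ≤ L ^ 2 := sq_nonneg L
  rw [hηR]
  calc ‖ωt - z‖ ^ 2 ≤ _ := hmono
    _ = _ := hsplit
    _ ≤ 2 * (∫ ω', ‖ωnext ω' - ωt‖ ^ 2 ∂μ)
        + 8 * η ^ 2 * L ^ 2 * (∫ ω', ‖ωhalf ω' - ωt‖ ^ 2 ∂μ) + 8 * η ^ 2 * σ ^ 2 := by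
        have h1 : 4 * η ^ 2 * (∫ ω', ‖Ghat' ω' - G (ωhalf ω')‖ ^ 2 ∂μ) ≤ 4 * η ^ 2 * σ ^ 2 :=
          mul_le_mul_of_nonneg_left hvar' (by positivity)
        have hσ : 0 ≤ σ ^ 2 := le_trans hnn3 hvar'
        nlinarith [mul_nonneg (mul_nonneg hη2 hL2) hnn2, mul_nonneg hη2 hσ]
end
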